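/- Let q ≥ 2 be an integer and take the weight w = w_q (the case S = {q}, c ≡ 1 of zero generalized Pascal weights, so w(n,m) = 1 if n mod q ≥ m mod q, else 0). For i = 1,2,3,4 let η_i be real formal power series with (η_i)_N = 0 whenever N mod q < q − ⌊q/2⌋, and set w_i = 1 + η_i. Then M(w_1,w_2)·M(w_3,w_4) = M(1+η_1+η_3, 1+η_2+η_4) = M(w_3,w_4)·M(w_1,w_2); in particular these matrices form a commutative subgroup of the group of matrices M(b,a). -/

import Mathlib

open PowerSeries Finset

/-- The `P_{0,q}` weight: `w_q(n,m) = 1` if `n % q ≥ m % q`, else `0`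
(the case `S = {q}`, `c ≡ 1` of zero generalized Pascal weights). -/
noncomputable def wq (q n m : ℕ) : ℝ := if m % q ≤ n % q then 1 else 0

/-- Convolution (the `∘`-product) of formal power series with respect to a weight `w`. -/
noncomputable def conv (w : ℕ → ℕ → ℝ) (a b : PowerSeries ℝ) : PowerSeries ℝ :=
  PowerSeries.mk fun n => ∑ m ∈ Finset.range (n + 1), w n m * coeff m a * coeff (n - m) b

/-- Iterated `∘`-power `f^{(k)}` with respect to a weight `w`. -/
noncomputable def convPow (w : ℕ → ℕ → ℝ) (f : PowerSeries ℝ) : ℕ → PowerSeries ℝ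
  | 0 => 1
  | k + 1 => conv w f (convPow w f k)

/-- The lower triangular matrix `M(b,a)` with entries `M(b,a)_{n,m} = [x^n](b ∘ x^m ∘ a^{(m)})`. -/
noncomputable def Mmat (w : ℕ → ℕ → ℝ) (b a : PowerSeries ℝ) : ℕ → ℕ → ℝ :=
  fun n m => coeff n (conv w b (conv w ((X : PowerSeries ℝ) ^ m) (convPow w a m)))

/-- Product of lower triangular `ℕ×ℕ` matrices (an entrywise finite sum). -/
noncomputable def matMul (A B : ℕ → ℕ → ℝ) : ℕ → ℕ → ℝ :=
  fun n m => ∑ k ∈ Finset.range (n + 1), A n k * B k m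

/-!
If `η` and `η'` vanish off the residues `≥ q - ⌊q/2⌋`, then any two indices carrying nonzero
coefficients have residues adding up to at least `q`, whereas the weight `w_q` only lets indices
meet whose residues add up to less than `q`. Hence `η ∘ η' = 0` and `η ∘ (X ^ m ∘ η') = 0`, so
`(1 + η')^{(m)} = 1 + m η'` and `M(1 + η, 1 + η') = I + N(η, η')`, where `N` is lower
triangular, additive in `(η, η')`, and `N(η₁, η₂) · N(η₃, η₄) = 0`. Therefore
`(I + N) (I + N') = I + N + N'`.
-/

theorem Nat.sub_mod_eq_ite {q m n : ℕ} (h : m ≤ n) :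
    (n - m) % q = if m % q ≤ n % q then n % q - m % q else n % q + q - m % q := by
  rcases q.eq_zero_or_pos with rfl | hq
  · simp [h]
  have hsum := Nat.add_mod_eq_ite (m := n - m) (n := m) (k := q)
  rw [Nat.sub_add_cancel h] at hsum
  have := Nat.mod_lt (n - m) hq
  have := Nat.mod_lt m hq
  split_ifs at hsum ⊢ <;> omega

section Conv

variable {w : ℕ → ℕ → ℝ}

@[simp]
theorem coeff_conv (a b : PowerSeries ℝ) (n : ℕ) :
    coeff n (conv w a b) = ∑ m ∈ range (n + 1), w n m * coeff m a * coeff (n - m) b := by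
  simp [conv, coeff_mk]

theorem conv_add_left (a b f : PowerSeries ℝ) :
    conv w (a + b) f = conv w a f + conv w b f := by
  ext n
  simp only [coeff_conv, map_add, ← sum_add_distrib]
  exact sum_congr rfl fun _ _ => by ring

theorem conv_add_right (f a b : PowerSeries ℝ) :
    conv w f (a + b) = conv w f a + conv w f b := by
  ext n
  simp only [coeff_conv, map_add, ← sum_add_distrib]
  exact sum_congr rfl fun _ _ => by ring

theorem conv_smul_right (r : ℝ) (f a : PowerSeries ℝ) :
    conv w f (r • a) = r • conv w f a := by
  ext n
  simp only [coeff_conv, map_smul, smul_eq_mul, mul_sum]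
  exact sum_congr rfl fun _ _ => by ring

theorem conv_one_left (hw : ∀ n, w n 0 = 1) (f : PowerSeries ℝ) : conv w 1 f = f := by
  ext n
  rw [coeff_conv, sum_eq_single 0 (fun m _ hm => by simp [coeff_one, hm]) (by simp)]
  simp [hw]

theorem conv_one_right (hw : ∀ n, w n n = 1) (f : PowerSeries ℝ) : conv w f 1 = f := by
  ext n
  rw [coeff_conv, sum_eq_single n (fun m hm hmn => ?_) (by simp)]
  · simp [hw]
  · have : n - m ≠ 0 := by have := mem_range.1 hm; omega
    simp [coeff_one, this]

theorem conv_comm (hw : ∀ n m, m ≤ n → w n (n - m) = w n m) (a b : PowerSeries ℝ) :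
    conv w a b = conv w b a := by
  ext n
  rw [coeff_conv, coeff_conv, ← sum_range_reflect]
  refine sum_congr rfl fun m hm => ?_
  have hmn : m ≤ n := Nat.lt_succ_iff.1 (mem_range.1 hm)
  rw [Nat.add_sub_cancel, Nat.sub_sub_self hmn, hw n m hmn]
  ring

theorem coeff_X_pow_conv (m : ℕ) (f : PowerSeries ℝ) (n : ℕ) :
    coeff n (conv w (X ^ m) f) = if m ≤ n then w n m * coeff (n - m) f else 0 := by
  rw [coeff_conv]
  simp_rw [coeff_X_pow, mul_ite, ite_mul, mul_one, mul_zero, zero_mul]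
  simp [sum_ite_eq']

theorem coeff_conv_eq_sum (f g : PowerSeries ℝ) (n : ℕ) :
    coeff n (conv w f g) = ∑ k ∈ range (n + 1), coeff n (conv w (X ^ k) g) * coeff k f := by
  rw [coeff_conv]
  refine sum_congr rfl fun k hk => ?_
  rw [coeff_X_pow_conv, if_pos (Nat.lt_succ_iff.1 (mem_range.1 hk))]
  ring

theorem convPow_one_add (h0 : ∀ n, w n 0 = 1) (hd : ∀ n, w n n = 1) {η : PowerSeries ℝ}
    (hη : conv w η η = 0) (m : ℕ) : convPow w (1 + η) m = 1 + (m : ℝ) • η := by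
  induction m with
  | zero => simp [convPow]
  | succ k ih =>
    rw [convPow, ih, conv_add_left, conv_one_left h0, conv_add_right, conv_one_right hd,
      conv_smul_right, hη]
    push_cast
    module

end Conv

theorem matMul_one_add_one_add {A B : ℕ → ℕ → ℝ} (hA : ∀ n m, n < m → A n m = 0)
    (hAB : matMul A B = 0) :
    matMul (fun n m => (if n = m then 1 else 0) + A n m)
        (fun n m => (if n = m then 1 else 0) + B n m) =
      fun n m => (if n = m then 1 else 0) + (A n m + B n m) := by
  ext n m
  have hABnm : ∑ k ∈ range (n + 1), A n k * B k m = 0 := congrFun (congrFun hAB n) m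
  simp only [matMul, add_mul, mul_add, sum_add_distrib, hABnm, ite_mul, one_mul, zero_mul,
    mul_ite, mul_one, mul_zero, sum_ite_eq, sum_ite_eq', mem_range, Nat.lt_succ_self, if_true]
  by_cases hmn : m ≤ n
  · simp only [Nat.lt_succ_iff.2 hmn, if_true]
    ring
  · simp only [Nat.lt_succ_iff, hmn, if_false, hA n m (by omega)]
    rw [if_neg (by omega)]
    ring

theorem wq_zero_right (q n : ℕ) : wq q n 0 = 1 := by simp [wq]

theorem wq_self (q n : ℕ) : wq q n n = 1 := by simp [wq]

theorem wq_sub_right (q : ℕ) {n m : ℕ} (h : m ≤ n) : wq q n (n - m) = wq q n m := by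
  unfold wq
  rcases q.eq_zero_or_pos with rfl | hq
  · simp [h]
  rw [Nat.sub_mod_eq_ite h]
  have := Nat.mod_lt m hq
  split_ifs <;> first | rfl | omega

def HighResidueSupported (q : ℕ) (η : PowerSeries ℝ) : Prop :=
  ∀ N : ℕ, N % q < q - q / 2 → coeff N η = 0

namespace HighResidueSupported

variable {q : ℕ} {α β : PowerSeries ℝ}

theorem add (hα : HighResidueSupported q α) (hβ : HighResidueSupported q β) :
    HighResidueSupported q (α + β) := fun N hN => by
  rw [map_add, hα N hN, hβ N hN, add_zero]

theorem smul (r : ℝ) (hα : HighResidueSupported q α) : HighResidueSupported q (r • α) :=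
  fun N hN => by rw [map_smul, hα N hN, smul_zero]

/-- Two residues that are both at least `q - ⌊q/2⌋` add up to at least `q`. -/
theorem coeff_mul_coeff_eq_zero (hα : HighResidueSupported q α) (hβ : HighResidueSupported q β)
    {a b : ℕ} (hab : a % q + b % q < q) : coeff a α * coeff b β = 0 := by
  by_cases ha : a % q < q - q / 2
  · rw [hα a ha, zero_mul]
  · rw [hβ b (by omega), mul_zero]

/-- When `m % q ≤ k % q ≤ n % q`, the residues of `n - k` and `k - m` add up to
`n % q - m % q < q`. -/
theorem coeff_X_pow_conv_mul_coeff_X_pow_conv (hq : 0 < q) (hα : HighResidueSupported q α)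
    (hβ : HighResidueSupported q β) (n k m : ℕ) :
    coeff n (conv (wq q) (X ^ k) α) * coeff k (conv (wq q) (X ^ m) β) = 0 := by
  simp only [coeff_X_pow_conv, wq]
  split_ifs with hkn hkn' hmk hmk' <;> simp only [zero_mul, mul_zero, one_mul]
  apply coeff_mul_coeff_eq_zero hα hβ
  rw [Nat.sub_mod_eq_ite hkn, Nat.sub_mod_eq_ite hmk, if_pos hkn', if_pos hmk']
  have := Nat.mod_lt n hq
  omega

theorem conv_conv_X_pow_eq_zero (hq : 0 < q) (hα : HighResidueSupported q α)
    (hβ : HighResidueSupported q β) (m : ℕ) :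
    conv (wq q) α (conv (wq q) (X ^ m) β) = 0 := by
  ext n
  rw [conv_comm (fun _ _ => wq_sub_right q), coeff_conv_eq_sum, map_zero]
  exact sum_eq_zero fun k _ => coeff_X_pow_conv_mul_coeff_X_pow_conv hq hα hβ n k m

theorem conv_eq_zero (hq : 0 < q) (hα : HighResidueSupported q α)
    (hβ : HighResidueSupported q β) : conv (wq q) α β = 0 := by
  simpa [conv_one_left (wq_zero_right q)] using conv_conv_X_pow_eq_zero hq hα hβ 0

end HighResidueSupported

/-- For supported `η, η'` this is `M(1 + η, 1 + η')` minus the identity. -/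
noncomputable def nilPart (q : ℕ) (η η' : PowerSeries ℝ) : ℕ → ℕ → ℝ :=
  fun n m => coeff n (conv (wq q) (X ^ m) (η + (m : ℝ) • η'))

theorem nilPart_eq_zero_of_lt (q : ℕ) (η η' : PowerSeries ℝ) {n m : ℕ} (h : n < m) :
    nilPart q η η' n m = 0 := by
  rw [nilPart, coeff_X_pow_conv, if_neg (by omega)]

theorem nilPart_add (q : ℕ) (η₁ η₂ η₃ η₄ : PowerSeries ℝ) :
    nilPart q (η₁ + η₃) (η₂ + η₄) = nilPart q η₁ η₂ + nilPart q η₃ η₄ := by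
  ext n m
  simp only [nilPart, Pi.add_apply, ← map_add, ← conv_add_right]
  congr 2
  module

theorem matMul_nilPart_eq_zero {q : ℕ} (hq : 0 < q) {η₁ η₂ η₃ η₄ : PowerSeries ℝ}
    (h₁ : HighResidueSupported q η₁) (h₂ : HighResidueSupported q η₂)
    (h₃ : HighResidueSupported q η₃) (h₄ : HighResidueSupported q η₄) :
    matMul (nilPart q η₁ η₂) (nilPart q η₃ η₄) = 0 := by
  ext n m
  exact sum_eq_zero fun k _ => HighResidueSupported.coeff_X_pow_conv_mul_coeff_X_pow_conv hq
    (h₁.add (h₂.smul k)) (h₃.add (h₄.smul m)) n k m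

theorem Mmat_wq_one_add {q : ℕ} (hq : 0 < q) {η η' : PowerSeries ℝ}
    (hη : HighResidueSupported q η) (hη' : HighResidueSupported q η') :
    Mmat (wq q) (1 + η) (1 + η') =
      fun n m => (if n = m then 1 else 0) + nilPart q η η' n m := by
  ext n m
  have hcol : conv (wq q) (X ^ m) (1 + (m : ℝ) • η') =
      X ^ m + (m : ℝ) • conv (wq q) (X ^ m) η' := by
    rw [conv_add_right, conv_one_right (wq_self q), conv_smul_right]
  have hη_col : conv (wq q) η (conv (wq q) (X ^ m) (1 + (m : ℝ) • η')) =
      conv (wq q) (X ^ m) η := by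
    rw [hcol, conv_add_right, conv_smul_right, hη.conv_conv_X_pow_eq_zero hq hη', smul_zero,
      add_zero, conv_comm (fun _ _ => wq_sub_right q)]
  rw [Mmat, convPow_one_add (wq_zero_right q) (wq_self q) (hη'.conv_eq_zero hq hη'),
    conv_add_left, conv_one_left (wq_zero_right q), hη_col, hcol, nilPart, conv_add_right,
    conv_smul_right]
  simp only [map_add, map_smul, coeff_X_pow, smul_eq_mul]
  ring

theorem matMul_Mmat_wq_one_add {q : ℕ} (hq : 0 < q) {η₁ η₂ η₃ η₄ : PowerSeries ℝ}
    (h₁ : HighResidueSupported q η₁) (h₂ : HighResidueSupported q η₂)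
    (h₃ : HighResidueSupported q η₃) (h₄ : HighResidueSupported q η₄) :
    matMul (Mmat (wq q) (1 + η₁) (1 + η₂)) (Mmat (wq q) (1 + η₃) (1 + η₄)) =
      Mmat (wq q) (1 + η₁ + η₃) (1 + η₂ + η₄) := by
  rw [add_assoc, add_assoc, Mmat_wq_one_add hq h₁ h₂, Mmat_wq_one_add hq h₃ h₄,
    Mmat_wq_one_add hq (h₁.add h₃) (h₂.add h₄), nilPart_add,
    matMul_one_add_one_add (fun _ _ => nilPart_eq_zero_of_lt q η₁ η₂)
      (matMul_nilPart_eq_zero hq h₁ h₂ h₃ h₄)]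
  rfl

/-- The matrices `M(1+η,1+η')`, with `η, η'` supported on residues
`N % q ≥ q − ⌊q/2⌋`, form a commutative subgroup:
`M(1+η₁,1+η₂)·M(1+η₃,1+η₄) = M(1+η₁+η₃, 1+η₂+η₄) = M(1+η₃,1+η₄)·M(1+η₁,1+η₂)`. -/
theorem stmt14 (q : ℕ) (hq : 2 ≤ q) (η₁ η₂ η₃ η₄ : PowerSeries ℝ)
    (h₁ : ∀ N : ℕ, N % q < q - q / 2 → coeff N η₁ = 0)
    (h₂ : ∀ N : ℕ, N % q < q - q / 2 → coeff N η₂ = 0)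
    (h₃ : ∀ N : ℕ, N % q < q - q / 2 → coeff N η₃ = 0)
    (h₄ : ∀ N : ℕ, N % q < q - q / 2 → coeff N η₄ = 0) :
    matMul (Mmat (wq q) (1 + η₁) (1 + η₂)) (Mmat (wq q) (1 + η₃) (1 + η₄)) =
        Mmat (wq q) (1 + η₁ + η₃) (1 + η₂ + η₄) ∧
      matMul (Mmat (wq q) (1 + η₃) (1 + η₄)) (Mmat (wq q) (1 + η₁) (1 + η₂)) =
        Mmat (wq q) (1 + η₁ + η₃) (1 + η₂ + η₄) := by
  have hq₀ : 0 < q := by omega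
  refine ⟨matMul_Mmat_wq_one_add hq₀ h₁ h₂ h₃ h₄, ?_⟩
  rw [matMul_Mmat_wq_one_add hq₀ h₃ h₄ h₁ h₂, add_right_comm _ η₃, add_right_comm _ η₄]
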